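/- Let N, d ∈ ℕ and let G₁, …, G_d be N×N complex matrices such that each matrix 2·G_k satisfies the row condition (every row of 2·G_k either has exactly one non-zero entry lying in S₁, or exactly two non-zero entries both lying in S₂). Let U = G_d · G_{d−1} ⋯ G₁, and for indices (r, s) let a, b, c, e be the (unique) integers with 2^d · U(r, s) = a + b·i + c·√2 + e·i·√2. Then each of the integers x ∈ {a, b, c, e} satisfies −2^{⌈3d/2⌉+1} < x < 2^{⌈3d/2⌉+1}; hence each coefficient is representable as a signed integer on ⌈3d/2⌉ + 2 bits. -/

import Mathlib

noncomputable def S1 : Set ℂ :=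
  {2, -2, 2 * Complex.I, -(2 * Complex.I),
   (Real.sqrt 2 : ℂ) + Complex.I * (Real.sqrt 2 : ℂ),
   (Real.sqrt 2 : ℂ) - Complex.I * (Real.sqrt 2 : ℂ),
   -(Real.sqrt 2 : ℂ) + Complex.I * (Real.sqrt 2 : ℂ),
   -(Real.sqrt 2 : ℂ) - Complex.I * (Real.sqrt 2 : ℂ)}

noncomputable def S2 : Set ℂ :=
  {(Real.sqrt 2 : ℂ), -(Real.sqrt 2 : ℂ),
   Complex.I * (Real.sqrt 2 : ℂ), -(Complex.I * (Real.sqrt 2 : ℂ)),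
   1 + Complex.I, 1 - Complex.I}

/-- Every row has exactly one non-zero entry lying in `S1`, or exactly two
non-zero entries both lying in `S2`. -/
def RowCond {n : Type*} (M : Matrix n n ℂ) : Prop :=
  ∀ r, (∃ j₀, M r j₀ ≠ 0 ∧ M r j₀ ∈ S1 ∧ ∀ j, j ≠ j₀ → M r j = 0) ∨
       (∃ j₁ j₂, j₁ ≠ j₂ ∧ M r j₁ ≠ 0 ∧ M r j₂ ≠ 0 ∧
          M r j₁ ∈ S2 ∧ M r j₂ ∈ S2 ∧ ∀ j, j ≠ j₁ → j ≠ j₂ → M r j = 0)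

/-!
The entries of every gate `2 • G k` lie in `ℤ[i, √2]`, so the whole computation can be lifted to
the ring `ℤ[i][√2]`, which has two complex embeddings, `√2 ↦ √2` and `√2 ↦ -√2`. Both send each
element of `S1` (resp. `S2`) to a number of modulus `2` (resp. `√2`), so under either embedding
every lifted gate has `ℓ^∞` operator norm (maximal row sum of moduli) at most `2√2`, and hence
both conjugates `(a + bi) ± (c + ei)√2` of an entry of `2^d U` have modulus at most
`(2√2)^d = 2^(3d/2)`. The first embedding is injective because `√2` is irrational, so
`a, b, c, e` are the coordinates of the lifted entry, and adding and subtracting the two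
conjugates bounds `a, b, c√2, e√2`.
-/

open Complex Matrix

local notation "ℤ[i,√2]" => QuadraticAlgebra GaussianInt 2 0

namespace QuadraticAlgebra

def toComplex (t : ℂ) (ht : t * t = 2) : ℤ[i,√2] →+* ℂ where
  toFun z := z.re + z.im * t
  map_one' := by simp
  map_mul' z w := by
    simp only [re_mul, im_mul, map_add, map_mul, map_ofNat, zero_mul, add_zero]
    linear_combination -(z.im * w.im : ℂ) * ht
  map_zero' := by simp
  map_add' z w := by simp only [re_add, im_add, map_add]; ring

@[simp]
lemma toComplex_apply (t : ℂ) (ht : t * t = 2) (z : ℤ[i,√2]) :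
    toComplex t ht z = z.re + z.im * t := rfl

lemma re_toComplex_ofReal (t : ℝ) (ht : (t : ℂ) * t = 2) (z : ℤ[i,√2]) :
    (toComplex t ht z).re = z.re.re + z.im.re * t := by
  rw [toComplex_apply, GaussianInt.toComplex_def, GaussianInt.toComplex_def]
  simp

lemma im_toComplex_ofReal (t : ℝ) (ht : (t : ℂ) * t = 2) (z : ℤ[i,√2]) :
    (toComplex t ht z).im = z.re.im + z.im.im * t := by
  rw [toComplex_apply, GaussianInt.toComplex_def, GaussianInt.toComplex_def]
  simp

end QuadraticAlgebra

lemma ofReal_sqrt_two_mul_self : ((√2 : ℝ) : ℂ) * (√2 : ℝ) = 2 := by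
  rw [← ofReal_mul, Real.mul_self_sqrt zero_le_two, ofReal_ofNat]

lemma ofReal_neg_sqrt_two_mul_self : ((-√2 : ℝ) : ℂ) * (-√2 : ℝ) = 2 := by
  rw [ofReal_neg, neg_mul_neg, ofReal_sqrt_two_mul_self]

local notation "σ₊" => QuadraticAlgebra.toComplex _ ofReal_sqrt_two_mul_self
local notation "σ₋" => QuadraticAlgebra.toComplex _ ofReal_neg_sqrt_two_mul_self

lemma eq_zero_of_intCast_add_mul_sqrt_two_eq_zero {p q : ℤ} (h : (p : ℝ) + q * √2 = 0) :
    p = 0 ∧ q = 0 := by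
  obtain rfl : q = 0 := by
    by_contra hq
    exact (irrational_sqrt_two.intCast_mul hq).ne_int (-p) (by push_cast; linarith)
  simpa using h

lemma toComplex_sqrt_two_injective : Function.Injective σ₊ := by
  refine (injective_iff_map_eq_zero _).2 fun z hz => ?_
  have hre := QuadraticAlgebra.re_toComplex_ofReal _ ofReal_sqrt_two_mul_self z
  have him := QuadraticAlgebra.im_toComplex_ofReal _ ofReal_sqrt_two_mul_self z
  rw [hz, zero_re] at hre
  rw [hz, zero_im] at him
  obtain ⟨h₁, h₂⟩ := eq_zero_of_intCast_add_mul_sqrt_two_eq_zero hre.symm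
  obtain ⟨h₃, h₄⟩ := eq_zero_of_intCast_add_mul_sqrt_two_eq_zero him.symm
  ext <;> assumption

lemma abs_le_of_abs_add_mul_sqrt_two_le {u v B : ℝ} (hp : |u + v * √2| ≤ B)
    (hm : |u + v * -√2| ≤ B) : |u| ≤ B ∧ |v| ≤ B := by
  rw [abs_le] at hp hm
  have hv : |v * √2| ≤ B := abs_le.2 ⟨by linarith, by linarith⟩
  refine ⟨abs_le.2 ⟨by linarith, by linarith⟩, ?_⟩
  calc |v| ≤ |v| * √2 := le_mul_of_one_le_right (abs_nonneg v) Real.one_lt_sqrt_two.le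
    _ = |v * √2| := by rw [abs_mul, abs_of_pos (Real.sqrt_pos.2 zero_lt_two)]
    _ ≤ B := hv

lemma abs_coeffs_le_of_norm_toComplex_le {z : ℤ[i,√2]} {B : ℝ} (hp : ‖σ₊ z‖ ≤ B)
    (hm : ‖σ₋ z‖ ≤ B) :
    |(z.re.re : ℝ)| ≤ B ∧ |(z.re.im : ℝ)| ≤ B ∧ |(z.im.re : ℝ)| ≤ B ∧ |(z.im.im : ℝ)| ≤ B := by
  have hre := abs_le_of_abs_add_mul_sqrt_two_le
    ((QuadraticAlgebra.re_toComplex_ofReal _ _ z ▸ abs_re_le_norm _).trans hp)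
    ((QuadraticAlgebra.re_toComplex_ofReal _ _ z ▸ abs_re_le_norm _).trans hm)
  have him := abs_le_of_abs_add_mul_sqrt_two_le
    ((QuadraticAlgebra.im_toComplex_ofReal _ _ z ▸ abs_im_le_norm _).trans hp)
    ((QuadraticAlgebra.im_toComplex_ofReal _ _ z ▸ abs_im_le_norm _).trans hm)
  exact ⟨hre.1, him.1, hre.2, him.2⟩

lemma norm_of_mem_S1 {z : ℂ} (hz : z ∈ S1) : ‖z‖ = 2 := by
  simp only [S1, Set.mem_insert_iff, Set.mem_singleton_iff] at hz
  rcases hz with rfl | rfl | rfl | rfl | rfl | rfl | rfl | rfl <;>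
    simp [norm_def, normSq_apply, show (2 + 2 : ℝ) = 2 ^ 2 by norm_num]

lemma norm_of_mem_S2 {z : ℂ} (hz : z ∈ S2) : ‖z‖ = √2 := by
  simp only [S2, Set.mem_insert_iff, Set.mem_singleton_iff] at hz
  rcases hz with rfl | rfl | rfl | rfl | rfl | rfl <;>
    simp [norm_def, normSq_apply, show (1 + 1 : ℝ) = 2 by norm_num]

lemma exists_gaussianInt_eq_or_mul_sqrt_two_eq {z : ℂ} (hz : z = 0 ∨ z ∈ S1 ∨ z ∈ S2) :
    ∃ u : GaussianInt, (u : ℂ) = z ∨ u * ((√2 : ℝ) : ℂ) = z := by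
  simp only [S1, S2, Set.mem_insert_iff, Set.mem_singleton_iff] at hz
  rcases hz with rfl | (rfl | rfl | rfl | rfl | rfl | rfl | rfl | rfl) |
    (rfl | rfl | rfl | rfl | rfl | rfl)
  exacts [⟨0, .inl (by simp)⟩, ⟨⟨2, 0⟩, .inl (by simp [GaussianInt.toComplex_def'])⟩,
    ⟨⟨-2, 0⟩, .inl (by simp [GaussianInt.toComplex_def'])⟩,
    ⟨⟨0, 2⟩, .inl (by simp [GaussianInt.toComplex_def'])⟩,
    ⟨⟨0, -2⟩, .inl (by simp [GaussianInt.toComplex_def'])⟩,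
    ⟨⟨1, 1⟩, .inr (by simp [GaussianInt.toComplex_def']; ring)⟩,
    ⟨⟨1, -1⟩, .inr (by simp [GaussianInt.toComplex_def']; ring)⟩,
    ⟨⟨-1, 1⟩, .inr (by simp [GaussianInt.toComplex_def']; ring)⟩,
    ⟨⟨-1, -1⟩, .inr (by simp [GaussianInt.toComplex_def']; ring)⟩,
    ⟨1, .inr (by simp)⟩, ⟨-1, .inr (by simp)⟩,
    ⟨⟨0, 1⟩, .inr (by simp [GaussianInt.toComplex_def'])⟩,
    ⟨⟨0, -1⟩, .inr (by simp [GaussianInt.toComplex_def'])⟩,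
    ⟨⟨1, 1⟩, .inl (by simp [GaussianInt.toComplex_def'])⟩,
    ⟨⟨1, -1⟩, .inl (by simp [GaussianInt.toComplex_def', sub_eq_add_neg])⟩]

lemma exists_toComplex_eq {z : ℂ} (hz : z = 0 ∨ z ∈ S1 ∨ z ∈ S2) :
    ∃ x : ℤ[i,√2], σ₊ x = z ∧ ‖σ₋ x‖ = ‖z‖ := by
  obtain ⟨u, rfl | rfl⟩ := exists_gaussianInt_eq_or_mul_sqrt_two_eq hz
  · exact ⟨⟨u, 0⟩, by simp, by simp⟩
  · exact ⟨⟨0, u⟩, by simp, by simp⟩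

section RowCond

variable {n : Type*} {M : Matrix n n ℂ}

lemma RowCond.entry_mem (hM : RowCond M) (i j : n) : M i j = 0 ∨ M i j ∈ S1 ∨ M i j ∈ S2 := by
  rcases hM i with ⟨j₀, -, hj₀, hzero⟩ | ⟨j₁, j₂, -, -, -, hj₁, hj₂, hzero⟩
  · by_cases hj : j = j₀
    · exact .inr (.inl (hj ▸ hj₀))
    · exact .inl (hzero j hj)
  · by_cases hj : j = j₁
    · exact .inr (.inr (hj ▸ hj₁))
    by_cases hj' : j = j₂
    · exact .inr (.inr (hj' ▸ hj₂))
    · exact .inl (hzero j hj hj')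

lemma RowCond.sum_norm_le [Fintype n] (hM : RowCond M) (i : n) :
    ∑ j, ‖M i j‖ ≤ 2 * √2 := by
  classical
  rcases hM i with ⟨j₀, -, hj₀, hzero⟩ | ⟨j₁, j₂, hne, -, -, hj₁, hj₂, hzero⟩
  · rw [Finset.sum_eq_single j₀ (fun j _ hj => by rw [hzero j hj, norm_zero]) (by simp),
      norm_of_mem_S1 hj₀]
    nlinarith [Real.one_lt_sqrt_two]
  · rw [← Finset.sum_subset (Finset.subset_univ {j₁, j₂}) fun j _ hj => ?_,
      Finset.sum_pair hne, norm_of_mem_S2 hj₁, norm_of_mem_S2 hj₂, two_mul]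
    simp only [Finset.mem_insert, Finset.mem_singleton, not_or] at hj
    rw [hzero j hj.1 hj.2, norm_zero]

end RowCond

section LinftyOp

attribute [local instance] Matrix.linftyOpSeminormedAddCommGroup

variable {n : Type*} [Fintype n]

lemma Matrix.linfty_opNorm_le_of_sum_norm_le {m α : Type*} [Fintype m]
    [SeminormedAddCommGroup α] {A : Matrix m n α} {r : ℝ} (hr : 0 ≤ r) (h : ∀ i, ∑ j, ‖A i j‖ ≤ r) : ‖A‖ ≤ r := by
  rw [linfty_opNorm_def, ← NNReal.coe_mk r hr, NNReal.coe_le_coe]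
  exact Finset.sup_le fun i _ => by simpa [← NNReal.coe_le_coe] using h i

lemma Matrix.norm_list_prod_mulVec_le {α : Type*} [NormedRing α] [DecidableEq n] {c : ℝ}
    (l : List (Matrix n n α)) (hl : ∀ A ∈ l, ‖A‖ ≤ c) (v : n → α) :
    ‖l.prod *ᵥ v‖ ≤ c ^ l.length * ‖v‖ := by
  induction l with
  | nil => simp
  | cons A l ih =>
    simp only [List.forall_mem_cons] at hl
    rw [List.prod_cons, ← mulVec_mulVec, List.length_cons, pow_succ', mul_assoc]
    exact (linfty_opNorm_mulVec _ _).trans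
      (mul_le_mul hl.1 (ih hl.2) (norm_nonneg _) ((norm_nonneg _).trans hl.1))

lemma Matrix.norm_list_prod_apply_le {α : Type*} [NormedRing α] [NormOneClass α] [DecidableEq n]
    {c : ℝ} (l : List (Matrix n n α)) (hl : ∀ A ∈ l, ‖A‖ ≤ c) (i j : n) :
    ‖l.prod i j‖ ≤ c ^ l.length := by
  have := norm_list_prod_mulVec_le l hl (Pi.single j 1)
  rw [mulVec_single_one, Pi.norm_single, norm_one, mul_one] at this
  exact (norm_le_pi_norm _ i).trans this

variable {M : Matrix n n ℂ}

lemma RowCond.linfty_opNorm_le (hM : RowCond M) : ‖M‖ ≤ 2 * √2 :=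
  Matrix.linfty_opNorm_le_of_sum_norm_le (by positivity) hM.sum_norm_le

lemma RowCond.exists_lift (hM : RowCond M) :
    ∃ A : Matrix n n ℤ[i,√2], A.map σ₊ = M ∧ ‖A.map σ₊‖ ≤ 2 * √2 ∧ ‖A.map σ₋‖ ≤ 2 * √2 := by
  choose A hA hA' using fun i j => exists_toComplex_eq (hM.entry_mem i j)
  have hAM : (Matrix.of A).map σ₊ = M := Matrix.ext hA
  refine ⟨.of A, hAM, hAM ▸ hM.linfty_opNorm_le, ?_⟩
  exact Matrix.linfty_opNorm_le_of_sum_norm_le (by positivity) fun i => by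
    simpa only [map_apply, of_apply, hA'] using hM.sum_norm_le i

lemma RowCond.exists_lift_list_prod [DecidableEq n] (l : List (Matrix n n ℂ))
    (hl : ∀ M ∈ l, RowCond M) (i j : n) :
    ∃ x : ℤ[i,√2], σ₊ x = l.prod i j ∧ ‖σ₊ x‖ ≤ (2 * √2) ^ l.length ∧
      ‖σ₋ x‖ ≤ (2 * √2) ^ l.length := by
  choose! lift hlift hnorm hnorm' using fun M hM => (hl M hM).exists_lift
  have hmap (σ : ℤ[i,√2] →+* ℂ) :
      σ ((l.map lift).prod i j) = (l.map fun M => (lift M).map σ).prod i j := by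
    simpa [List.map_map, Function.comp_def] using
      congrFun (congrFun (map_list_prod σ.mapMatrix (l.map lift)) i) j
  have hbound (σ : ℤ[i,√2] →+* ℂ) (hσ : ∀ M ∈ l, ‖(lift M).map σ‖ ≤ 2 * √2) :
      ‖σ ((l.map lift).prod i j)‖ ≤ (2 * √2) ^ l.length := by
    rw [hmap, ← List.length_map (f := fun M => (lift M).map σ)]
    exact Matrix.norm_list_prod_apply_le _ (by simpa using hσ) i j
  refine ⟨(l.map lift).prod i j, ?_, hbound _ hnorm, hbound _ hnorm'⟩
  rw [hmap, List.map_congr_left hlift, List.map_id']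

end LinftyOp

lemma two_mul_sqrt_two_pow_le (d : ℕ) : (2 * √2) ^ d ≤ 2 ^ ((3 * d + 1) / 2) := by
  refine le_of_pow_le_pow_left₀ two_ne_zero (by positivity) ?_
  calc ((2 * √2) ^ d) ^ 2 = (2 : ℝ) ^ (3 * d) := by
        rw [← pow_mul, mul_comm d 2, pow_mul, mul_pow, Real.sq_sqrt zero_le_two, pow_mul]
        norm_num
    _ ≤ (2 ^ ((3 * d + 1) / 2)) ^ 2 := by
        rw [← pow_mul]; exact pow_le_pow_right₀ one_le_two (by omega)

/-- Theorem 1 of the paper: the integer coefficients of the entries of `2^d` times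
a product of `d` gates fit on `⌈3d/2⌉ + 2` signed bits. -/
theorem coeffs_bit_bound (N d : ℕ)
    (G : Fin d → Matrix (Fin N) (Fin N) ℂ)
    (hG : ∀ k, RowCond ((2 : ℂ) • G k))
    (r s : Fin N) (a b c e : ℤ)
    (h : (2 : ℂ) ^ d * ((List.ofFn G).reverse.prod) r s =
        (a : ℂ) + (b : ℂ) * Complex.I + (c : ℂ) * (Real.sqrt 2 : ℂ) +
          (e : ℂ) * Complex.I * (Real.sqrt 2 : ℂ)) :
    ∀ x ∈ ({a, b, c, e} : Set ℤ),
      -(2 ^ ((3 * d + 1) / 2 + 1) : ℤ) < x ∧ x < 2 ^ ((3 * d + 1) / 2 + 1) := by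
  obtain ⟨z, hz, hp, hm⟩ := RowCond.exists_lift_list_prod
    (List.ofFn fun k => (2 : ℂ) • G k).reverse (by simpa using hG) r s
  rw [List.length_reverse, List.length_ofFn] at hp hm
  have hprod : (List.ofFn fun k => (2 : ℂ) • G k).reverse.prod =
      (2 : ℂ) ^ d • (List.ofFn G).reverse.prod := by
    simpa [List.map_reverse, List.map_ofFn, Function.comp_def] using
      (List.smul_prod (List.ofFn G).reverse (2 : ℂ)).symm
  have hz' : z = ⟨⟨a, b⟩, ⟨c, e⟩⟩ := by
    refine toComplex_sqrt_two_injective ?_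
    rw [hz, hprod, Matrix.smul_apply, smul_eq_mul, h]
    simp [GaussianInt.toComplex_def']
    ring
  subst hz'
  obtain ⟨ha, hb, hc, he⟩ := abs_coeffs_le_of_norm_toComplex_le hp hm
  have hbit {x : ℤ} (hx : |(x : ℝ)| ≤ (2 * √2) ^ d) :
      -(2 ^ ((3 * d + 1) / 2 + 1) : ℤ) < x ∧ x < 2 ^ ((3 * d + 1) / 2 + 1) := by
    have : |x| ≤ 2 ^ ((3 * d + 1) / 2) := by exact_mod_cast hx.trans (two_mul_sqrt_two_pow_le d)
    rw [pow_succ]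
    constructor <;> linarith [abs_le.1 this, pow_pos (two_pos : (0 : ℤ) < 2) ((3 * d + 1) / 2)]
  simp only [Set.mem_insert_iff, Set.mem_singleton_iff]
  rintro x (rfl | rfl | rfl | rfl) <;> exact hbit ‹_›
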